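/- arXiv:2412.10926 — 5 statements merged into one kernel-verified Lean document; each statement's English description precedes it below -/
import Mathlib

section
/- For integers r, s with 2 ≤ r < s, the complete bipartite graph K_{r,s} is not well-edge-dominated. -/
/-- `F` is an edge dominating set of `G`: every edge of `G` is in `F` or shares a
vertex with an edge of `F` (edges of `F` themselves share a vertex with themselves). -/
def IsEDS {V : Type*} (G : SimpleGraph V) (F : Finset (Sym2 V)) : Prop :=
  ↑F ⊆ G.edgeSet ∧ ∀ e ∈ G.edgeSet, ∃ f ∈ F, ∃ v : V, v ∈ e ∧ v ∈ f

/-- `F` is a minimal edge dominating set of `G`. -/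
def IsMinEDS {V : Type*} (G : SimpleGraph V) (F : Finset (Sym2 V)) : Prop :=
  IsEDS G F ∧ ∀ F' ⊂ F, ¬ IsEDS G F'

/-- `G` is well-edge-dominated: all minimal edge dominating sets have the same size. -/
def WellEdgeDominated {V : Type*} (G : SimpleGraph V) : Prop :=
  ∀ F₁ F₂ : Finset (Sym2 V), IsMinEDS G F₁ → IsMinEDS G F₂ → F₁.card = F₂.card

/-- `M` is a matching of `G`: a set of pairwise vertex-disjoint edges. -/
def IsMatchingSet {V : Type*} (G : SimpleGraph V) (M : Finset (Sym2 V)) : Prop :=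
  ↑M ⊆ G.edgeSet ∧ ∀ e ∈ M, ∀ f ∈ M, e ≠ f → ∀ v : V, ¬ (v ∈ e ∧ v ∈ f)

/-- `M` is a maximal matching of `G`: a matching such that every edge of `G`
shares a vertex with an edge of `M` (so no edge can be added). -/
def IsMaximalMatching {V : Type*} (G : SimpleGraph V) (M : Finset (Sym2 V)) : Prop :=
  IsMatchingSet G M ∧ ∀ e ∈ G.edgeSet, ∃ f ∈ M, ∃ v : V, v ∈ e ∧ v ∈ f

/-- `G` is equimatchable: all maximal matchings have the same size. -/
def Equimatchable {V : Type*} (G : SimpleGraph V) : Prop :=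
  ∀ M₁ M₂ : Finset (Sym2 V), IsMaximalMatching G M₁ → IsMaximalMatching G M₂ →
    M₁.card = M₂.card


/-- For `2 ≤ r < s`, the complete bipartite graph `K_{r,s}` is not well-edge-dominated. -/
theorem krs_not_wed (r s : ℕ) (hr : 2 ≤ r) (hrs : r < s) :
    ¬ WellEdgeDominated (completeBipartiteGraph (Fin r) (Fin s)) := by
  intro h
  set G := completeBipartiteGraph (Fin r) (Fin s) with hG
  have h0r : 0 < r := by omega
  have h1r : 1 < r := hr
  let z : Fin r := ⟨0, h0r⟩
  let F₁ : Finset (Sym2 (Fin r ⊕ Fin s)) :=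
    Finset.univ.image (fun j : Fin s => s(Sum.inl z, Sum.inr j))
  let F₂ : Finset (Sym2 (Fin r ⊕ Fin s)) :=
    Finset.univ.image (fun i : Fin r => s(Sum.inl i, Sum.inr (Fin.castLE hrs.le i)))
  have hcard₁ : F₁.card = s := by
    rw [Finset.card_image_of_injective _ (fun a b hab => by
      simpa [Sym2.eq_iff] using hab), Finset.card_univ, Fintype.card_fin]
  have hcard₂ : F₂.card = r := by
    rw [Finset.card_image_of_injective _ (fun a b hab => by
      simpa [Sym2.eq_iff] using hab), Finset.card_univ, Fintype.card_fin]
  -- any edge of G is s(inl u, inr v)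
  have edge_form : ∀ e ∈ G.edgeSet, ∃ u : Fin r, ∃ v : Fin s,
      e = s(Sum.inl u, Sum.inr v) := by
    intro e he
    induction e using Sym2.ind with
    | _ a b =>
      rw [SimpleGraph.mem_edgeSet] at he
      rcases a with a | a <;> rcases b with b | b <;> simp [hG] at he
      · exact ⟨a, b, rfl⟩
      · exact ⟨b, a, Sym2.eq_swap⟩
  have heds₁ : IsEDS G F₁ := by
    constructor
    · intro e he
      simp only [F₁, Finset.coe_image, Set.mem_image] at he
      obtain ⟨j, _, rfl⟩ := he
      simp [hG]
    · intro e he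
      obtain ⟨u, v, rfl⟩ := edge_form e he
      refine ⟨s(Sum.inl z, Sum.inr v), ?_, Sum.inr v, by simp, by simp⟩
      simp [F₁]
  have heds₂ : IsEDS G F₂ := by
    constructor
    · intro e he
      simp only [F₂, Finset.coe_image, Set.mem_image] at he
      obtain ⟨i, _, rfl⟩ := he
      simp [hG]
    · intro e he
      obtain ⟨u, v, rfl⟩ := edge_form e he
      refine ⟨s(Sum.inl u, Sum.inr (Fin.castLE hrs.le u)), ?_, Sum.inl u, by simp, by simp⟩
      simp [F₂]
  have hmin₁ : IsMinEDS G F₁ := by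
    refine ⟨heds₁, ?_⟩
    rintro F' hF' ⟨hsub, hdom⟩
    obtain ⟨x, hxF₁, hxF'⟩ := Finset.exists_of_ssubset hF'
    simp only [F₁, Finset.mem_image, Finset.mem_univ, true_and] at hxF₁
    obtain ⟨j, rfl⟩ := hxF₁
    have he : s(Sum.inl (⟨1, h1r⟩ : Fin r), Sum.inr j) ∈ G.edgeSet := by
      simp [hG]
    obtain ⟨f, hfF', v, hve, hvf⟩ := hdom _ he
    have hfF₁ : f ∈ F₁ := hF'.1 hfF'
    simp only [F₁, Finset.mem_image, Finset.mem_univ, true_and] at hfF₁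
    obtain ⟨j', rfl⟩ := hfF₁
    rw [Sym2.mem_iff] at hve hvf
    rcases hve with rfl | rfl
    · rcases hvf with h' | h'
      · simp [z] at h'
      · simp at h'
    · rcases hvf with h' | h'
      · simp at h'
      · simp at h'
        subst h'
        exact hxF' hfF'
  have hmin₂ : IsMinEDS G F₂ := by
    refine ⟨heds₂, ?_⟩
    rintro F' hF' ⟨hsub, hdom⟩
    obtain ⟨x, hxF₂, hxF'⟩ := Finset.exists_of_ssubset hF'
    simp only [F₂, Finset.mem_image, Finset.mem_univ, true_and] at hxF₂
    obtain ⟨i, rfl⟩ := hxF₂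
    have he : s(Sum.inl i, Sum.inr (⟨r, hrs⟩ : Fin s)) ∈ G.edgeSet := by
      simp [hG]
    obtain ⟨f, hfF', v, hve, hvf⟩ := hdom _ he
    have hfF₂ : f ∈ F₂ := hF'.1 hfF'
    simp only [F₂, Finset.mem_image, Finset.mem_univ, true_and] at hfF₂
    obtain ⟨i', rfl⟩ := hfF₂
    rw [Sym2.mem_iff] at hve hvf
    rcases hve with rfl | rfl
    · rcases hvf with h' | h'
      · simp at h'
        subst h'
        exact hxF' hfF'
      · simp at h'
    · rcases hvf with h' | h'
      · simp at h'
      · simp [Fin.ext_iff] at h'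
        have := i'.isLt
        omega
  have := h F₁ F₂ hmin₁ hmin₂
  rw [hcard₁, hcard₂] at this
  omega
end

section
/- If G is a connected bipartite equimatchable graph with bipartition U ∪ V where |U| = |V|, then G is isomorphic to the complete bipartite graph K_{n,n} where n = |U|. -/
/-!
Since every matching extends to a maximal one, in an equimatchable graph no matching is larger
than a maximal one. Let `S ⊆ U` be nonempty with some vertex outside `S ∪ N(S)`. By connectivity
some edge `pq` has `p ∈ N(S)` and `q ∈ U \ S`, and a maximal matching through `pq` matches `S`
into `N(S) \ {p}`; so every matching has fewer than `|U| - |S| + |N(S)|` edges. For `S` of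
maximum deficiency `|S| - |N(S)|` this contradicts the deficiency version of Hall's theorem unless
the deficiency is zero, so `G` has a perfect matching, and then `|N(S)| > |S|` for every nonempty
`S ⊊ U`. Hence Hall's theorem matches `U - u` into `V - v`, and a maximal (so perfect) matching
containing that matching must match `v` to `u`.
-/
open Finset

section Matchings

variable {W : Type*} {G : SimpleGraph W}

theorem isMatchingSet_singleton {a b : W} (hab : G.Adj a b) : IsMatchingSet G {s(a, b)} :=
  ⟨by simpa using hab, by simp +contextual⟩

namespace IsMatchingSet

variable {M : Finset (Sym2 W)}

theorem eq_of_mem_of_mem (hM : IsMatchingSet G M) {e f : Sym2 W} {v : W} (he : e ∈ M)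
    (hf : f ∈ M) (hve : v ∈ e) (hvf : v ∈ f) : e = f :=
  not_not.mp fun hef => hM.2 e he f hf hef v ⟨hve, hvf⟩

theorem adj (hM : IsMatchingSet G M) {a b : W} (h : s(a, b) ∈ M) : G.Adj a b :=
  G.mem_edgeSet.mp (hM.1 h)

end IsMatchingSet

def Saturates (M : Finset (Sym2 W)) (v : W) : Prop := ∃ e ∈ M, v ∈ e

open Classical in
noncomputable def neighborsIn (G : SimpleGraph W) (R A : Finset W) : Finset W :=
  R.filter fun r => ∃ a ∈ A, G.Adj a r

theorem mem_neighborsIn {R A : Finset W} {r : W} :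
    r ∈ neighborsIn G R A ↔ r ∈ R ∧ ∃ a ∈ A, G.Adj a r := by
  simp [neighborsIn]

theorem SimpleGraph.IsBipartiteWith.exists_mem_of_mem_edgeSet {s t : Set W}
    (hG : G.IsBipartiteWith s t) {e : Sym2 W} (he : e ∈ G.edgeSet) : ∃ a ∈ s, a ∈ e := by
  induction e using Sym2.ind with
  | _ a b =>
    rcases hG.mem_of_adj he with h | h
    exacts [⟨a, h.1, Sym2.mem_mk_left a b⟩, ⟨b, h.2, Sym2.mem_mk_right a b⟩]

theorem exists_injective_of_card_le_card_neighborsIn_add [Fintype W] {T R : Finset W} (d : ℕ)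
    (hall : ∀ A ⊆ T, #A ≤ #(neighborsIn G R A) + d) :
    ∃ f : T → W ⊕ Fin d, f.Injective ∧ ∀ t r, f t = .inl r → r ∈ R ∧ G.Adj t r := by
  classical
  -- Hall's theorem proper, after adding `d` new vertices adjacent to all of `T`.
  let rel : T → W ⊕ Fin d → Prop := fun t => Sum.elim (fun r => r ∈ R ∧ G.Adj t r) fun _ => True
  obtain ⟨f, hf, hrel⟩ := (Fintype.all_card_le_filter_rel_iff_exists_injective rel).mp <| by
    intro A
    rcases A.eq_empty_or_nonempty with rfl | ⟨a, ha⟩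
    · simp
    calc #A = #(A.map (Function.Embedding.subtype _)) := (card_map _).symm
      _ ≤ #(neighborsIn G R (A.map (Function.Embedding.subtype _))) + d :=
        hall _ fun _ h => by obtain ⟨t, -, rfl⟩ := mem_map.mp h; exact t.2
      _ = #((neighborsIn G R (A.map (Function.Embedding.subtype _))).disjSum univ) := by
        simp [card_disjSum]
      _ ≤ #{b | ∃ a ∈ A, rel a b} := card_le_card fun b hb => by
        simp only [mem_filter, mem_univ, true_and]
        rcases b with r | i
        · obtain ⟨hr, _, ht, htr⟩ := mem_neighborsIn.mp (inl_mem_disjSum.mp hb)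
          obtain ⟨t, htA, rfl⟩ := mem_map.mp ht
          exact ⟨t, htA, hr, htr⟩
        · exact ⟨a, ha, trivial⟩
  exact ⟨f, hf, fun t r h => by simpa [rel, h] using hrel t⟩

variable [DecidableEq W]

instance (M : Finset (Sym2 W)) : DecidablePred (Saturates M) :=
  fun _ => inferInstanceAs (Decidable (∃ e ∈ M, _))

namespace IsMatchingSet

variable {M : Finset (Sym2 W)}

theorem insert (hM : IsMatchingSet G M) {a b : W} (hab : G.Adj a b) (ha : ¬Saturates M a)
    (hb : ¬Saturates M b) : IsMatchingSet G (insert s(a, b) M) := by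
  have hfree : ∀ f ∈ M, ∀ v ∈ s(a, b), v ∉ f := by
    rintro f hf v hv hvf
    rcases Sym2.mem_iff.mp hv with rfl | rfl
    exacts [ha ⟨f, hf, hvf⟩, hb ⟨f, hf, hvf⟩]
  refine ⟨?_, ?_⟩
  · rw [coe_insert, Set.insert_subset_iff]
    exact ⟨hab, hM.1⟩
  · simp only [mem_insert]
    rintro e (rfl | he) f (rfl | hf) hef v ⟨hve, hvf⟩
    · exact hef rfl
    · exact hfree f hf v hve hvf
    · exact hfree e he v hvf hve
    · exact hM.2 e he f hf hef v ⟨hve, hvf⟩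

theorem card_le_card_filter_saturates (hM : IsMatchingSet G M) {A : Finset W}
    (hA : ∀ e ∈ M, ∃ a ∈ A, a ∈ e) : #M ≤ #(A.filter (Saturates M)) :=
  card_le_card_of_forall_subsingleton (fun e a => a ∈ e)
    (fun e he => (hA e he).imp fun _ ⟨ha, hae⟩ => ⟨mem_filter.mpr ⟨ha, e, he, hae⟩, hae⟩)
    (fun _ _ _ ⟨he, hae⟩ _ ⟨hf, haf⟩ => hM.eq_of_mem_of_mem he hf hae haf)

theorem saturates_of_card_le (hM : IsMatchingSet G M) {A : Finset W}
    (hA : ∀ e ∈ M, ∃ a ∈ A, a ∈ e) (hcard : #A ≤ #M) {a : W} (ha : a ∈ A) : Saturates M a := by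
  have hfilter : A.filter (Saturates M) = A :=
    eq_of_subset_of_card_le (filter_subset _ _) (hcard.trans (hM.card_le_card_filter_saturates hA))
  exact (mem_filter.mp (hfilter ▸ ha)).2

theorem exists_isMaximalMatching_superset [Fintype W] (hM : IsMatchingSet G M) :
    ∃ K, M ⊆ K ∧ IsMaximalMatching G K := by
  classical
  obtain ⟨K, hK, hmax⟩ := exists_max_image
    (univ.filter fun K => M ⊆ K ∧ IsMatchingSet G K) card ⟨M, by simpa using hM⟩
  simp only [mem_filter, mem_univ, true_and] at hK hmax
  refine ⟨K, hK.1, hK.2, fun e he => ?_⟩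
  induction e using Sym2.ind with
  | _ a b =>
    by_contra! hfree
    have ha : ¬Saturates K a := fun ⟨f, hf, haf⟩ => hfree f hf a (Sym2.mem_mk_left a b) haf
    have hb : ¬Saturates K b := fun ⟨f, hf, hbf⟩ => hfree f hf b (Sym2.mem_mk_right a b) hbf
    have hnew : s(a, b) ∉ K := fun h => ha ⟨_, h, Sym2.mem_mk_left a b⟩
    have := hmax _ ⟨hK.1.trans (subset_insert _ _), hK.2.insert (G.mem_edgeSet.mp he) ha hb⟩
    rw [card_insert_of_notMem hnew] at this
    omega

end IsMatchingSet

theorem Equimatchable.card_le [Fintype W] (heq : Equimatchable G) {M K : Finset (Sym2 W)}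
    (hM : IsMatchingSet G M) (hK : IsMaximalMatching G K) : #M ≤ #K := by
  obtain ⟨K', hMK', hK'⟩ := hM.exists_isMaximalMatching_superset
  exact (card_le_card hMK').trans (heq K' K hK' hK).le

theorem isMatchingSet_image {ι : Type*} {L : Finset ι} {a b : ι → W}
    (hadj : ∀ i ∈ L, G.Adj (a i) (b i)) (ha : Set.InjOn a L) (hb : Set.InjOn b L)
    (hab : ∀ i ∈ L, ∀ j ∈ L, a i ≠ b j) :
    IsMatchingSet G (L.image fun i => s(a i, b i)) ∧ #(L.image fun i => s(a i, b i)) = #L := by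
  refine ⟨⟨?_, ?_⟩, card_image_of_injOn fun i hi j hj h => ?_⟩
  · intro e he
    obtain ⟨i, hi, rfl⟩ := mem_image.mp he
    exact hadj i hi
  · simp only [mem_image]
    rintro _ ⟨i, hi, rfl⟩ _ ⟨j, hj, rfl⟩ hne v ⟨hvi, hvj⟩
    have hij : i ≠ j := fun h => hne (h ▸ rfl)
    rcases Sym2.mem_iff.mp hvi with rfl | rfl <;> rcases Sym2.mem_iff.mp hvj with h | h
    exacts [hij (ha hi hj h), hab i hi j hj h, hab j hj i hi h.symm, hij (hb hi hj h)]
  · rcases Sym2.eq_iff.mp h with ⟨h, -⟩ | ⟨h, -⟩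
    exacts [ha hi hj h, absurd h (hab i hi j hj)]

theorem exists_isMatchingSet_of_card_le_card_neighborsIn_add [Fintype W] {T R : Finset W}
    (hTR : Disjoint T R) (d : ℕ) (hall : ∀ A ⊆ T, #A ≤ #(neighborsIn G R A) + d) :
    ∃ M, IsMatchingSet G M ∧ #T ≤ #M + d ∧ ∀ e ∈ M, ∃ t ∈ T, ∃ r ∈ R, e = s(t, r) := by
  obtain ⟨f, hf, hfR⟩ := exists_injective_of_card_le_card_neighborsIn_add d hall
  let L := univ.filter fun t : T => (f t).isLeft
  let partner : T → W := fun t => (f t).elim id fun _ => t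
  have hpartner : ∀ t ∈ L, f t = .inl (partner t) := by
    intro t ht
    obtain ⟨r, hr⟩ := Sum.isLeft_iff.mp (mem_filter.mp ht).2
    simp [partner, hr]
  have hpartnerR : ∀ t ∈ L, partner t ∈ R ∧ G.Adj t (partner t) := fun t ht =>
    hfR t _ (hpartner t ht)
  obtain ⟨hM, hcard⟩ := isMatchingSet_image (fun t ht => (hpartnerR t ht).2)
    Subtype.val_injective.injOn
    (fun t ht t' ht' h => hf ((hpartner t ht).trans (h ▸ (hpartner t' ht').symm)))
    (fun t _ t' ht' h => disjoint_left.mp hTR t.2 (h ▸ (hpartnerR t' ht').1))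
  refine ⟨_, hM, ?_, ?_⟩
  · have hsplit : univ.image f ⊆ L.image f ∪ univ.image Sum.inr := by
      intro b hb
      obtain ⟨t, -, rfl⟩ := mem_image.mp hb
      by_cases ht : t ∈ L
      · exact mem_union_left _ (mem_image_of_mem f ht)
      · obtain ⟨i, hi⟩ := Sum.isRight_iff.mp (by simpa [L] using ht)
        exact mem_union_right _ (mem_image.mpr ⟨i, mem_univ _, hi.symm⟩)
    calc #T = #(univ.image f) := by
          rw [card_image_of_injective _ hf, card_univ, Fintype.card_coe]
      _ ≤ #(L.image f) + #(univ.image (Sum.inr : Fin d → W ⊕ Fin d)) :=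
        (card_le_card hsplit).trans (card_union_le _ _)
      _ = _ := by
        rw [hcard, card_image_of_injective _ hf, card_image_of_injective _ Sum.inr_injective,
          card_univ, Fintype.card_fin]
  · simp only [mem_image]
    rintro _ ⟨t, ht, rfl⟩
    exact ⟨t, t.2, partner t, (hpartnerR t ht).1, rfl⟩

section Bipartite

variable {U V : Finset W}

theorem exists_adj_neighborsIn_sdiff (hG : G.IsBipartiteWith U V) (hconn : G.Connected)
    {S : Finset W} (hSU : S ⊆ U) {s x : W} (hs : s ∈ S) (hx : x ∉ S ∪ neighborsIn G V S) :
    ∃ p ∈ neighborsIn G V S, ∃ q ∈ U \ S, G.Adj p q := by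
  obtain ⟨d, -, hd₁, hd₂⟩ := (hconn.preconnected s x).some.exists_boundary_dart
    ↑(S ∪ neighborsIn G V S) (by simp [hs]) (by simpa using hx)
  simp only [coe_union, Set.mem_union, mem_coe, not_or] at hd₁ hd₂
  rcases hd₁ with h | h
  · exact absurd (mem_neighborsIn.mpr ⟨hG.mem_of_mem_adj (hSU h) d.adj, _, h, d.adj⟩) hd₂.2
  · have hq : d.snd ∈ U := hG.symm.mem_of_mem_adj (mem_neighborsIn.mp h).1 d.adj
    exact ⟨_, h, _, mem_sdiff.mpr ⟨hq, hd₂.1⟩, d.adj⟩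

theorem IsMatchingSet.card_filter_saturates_le_card_erase {K : Finset (Sym2 W)}
    (hK : IsMatchingSet G K) (hG : G.IsBipartiteWith U V) {S : Finset W} (hSU : S ⊆ U) {p q : W}
    (hq : q ∉ S) (hqp : s(q, p) ∈ K) :
    #(S.filter (Saturates K)) ≤ #((neighborsIn G V S).erase p) := by
  refine card_le_card_of_forall_subsingleton (fun a b => s(a, b) ∈ K) ?_ ?_
  · intro a ha
    obtain ⟨haS, e, he, hae⟩ := mem_filter.mp ha
    obtain ⟨b, rfl⟩ := Sym2.mem_iff_exists.mp hae
    refine ⟨b, mem_erase.mpr ⟨?_, ?_⟩, he⟩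
    · intro hbp
      rw [hbp] at he
      have := hK.eq_of_mem_of_mem he hqp (Sym2.mem_mk_right a p) (Sym2.mem_mk_right q p)
      rcases Sym2.eq_iff.mp this with ⟨rfl, -⟩ | ⟨rfl, rfl⟩ <;> exact hq haS
    · exact mem_neighborsIn.mpr ⟨hG.mem_of_mem_adj (hSU haS) (hK.adj he), a, haS, hK.adj he⟩
  · rintro b - a ⟨-, ha⟩ a' ⟨-, ha'⟩
    exact Sym2.congr_left.mp
      (hK.eq_of_mem_of_mem ha ha' (Sym2.mem_mk_right a b) (Sym2.mem_mk_right a' b))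

variable [Fintype W]

theorem exists_isMaximalMatching_card_add_card_lt (hG : G.IsBipartiteWith U V) {S : Finset W}
    (hSU : S ⊆ U) {p q : W} (hp : p ∈ neighborsIn G V S) (hq : q ∈ U \ S) (hpq : G.Adj p q) :
    ∃ K, IsMaximalMatching G K ∧ #K + #S < #U + #(neighborsIn G V S) := by
  obtain ⟨K, hqpK, hK⟩ := (isMatchingSet_singleton hpq.symm).exists_isMaximalMatching_superset
  refine ⟨K, hK, ?_⟩
  have hKU : #K ≤ #(U.filter (Saturates K)) :=
    hK.1.card_le_card_filter_saturates fun _ he => hG.exists_mem_of_mem_edgeSet (hK.1.1 he)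
  have hsplit : U.filter (Saturates K) ⊆ (U \ S) ∪ S.filter (Saturates K) := by
    intro a ha
    obtain ⟨haU, hsat⟩ := mem_filter.mp ha
    by_cases haS : a ∈ S
    · exact mem_union_right _ (mem_filter.mpr ⟨haS, hsat⟩)
    · exact mem_union_left _ (mem_sdiff.mpr ⟨haU, haS⟩)
  have hS := hK.1.card_filter_saturates_le_card_erase hG hSU (mem_sdiff.mp hq).2
    (hqpK (mem_singleton_self _))
  have := card_le_card hsplit
  have := card_union_le (U \ S) (S.filter (Saturates K))
  rw [card_sdiff_of_subset hSU] at this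
  rw [card_erase_of_mem hp] at hS
  have := card_le_card hSU
  have : 0 < #(neighborsIn G V S) := card_pos.mpr ⟨p, hp⟩
  omega

end Bipartite

namespace Equimatchable

variable [Fintype W] {U V : Finset W}

theorem card_add_card_lt (heq : Equimatchable G) (hG : G.IsBipartiteWith U V)
    (hconn : G.Connected) {M : Finset (Sym2 W)} (hM : IsMatchingSet G M) {S : Finset W}
    (hSU : S ⊆ U) (hS : S.Nonempty) {x : W} (hx : x ∉ S ∪ neighborsIn G V S) :
    #M + #S < #U + #(neighborsIn G V S) := by
  obtain ⟨s, hs⟩ := hS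
  obtain ⟨p, hp, q, hq, hpq⟩ := exists_adj_neighborsIn_sdiff hG hconn hSU hs hx
  obtain ⟨K, hK, hlt⟩ := exists_isMaximalMatching_card_add_card_lt hG hSU hp hq hpq
  have := heq.card_le hM hK
  omega

theorem exists_isMatchingSet_card_le (heq : Equimatchable G) (hG : G.IsBipartiteWith U V)
    (hconn : G.Connected) (hcard : #U = #V) : ∃ M, IsMatchingSet G M ∧ #U ≤ #M := by
  obtain ⟨S, hSU, hmax⟩ := exists_max_image U.powerset (fun S => #S - #(neighborsIn G V S))
    ⟨∅, empty_mem_powerset _⟩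
  rw [mem_powerset] at hSU
  obtain ⟨M, hM, hUM, -⟩ := exists_isMatchingSet_of_card_le_card_neighborsIn_add (G := G)
    (disjoint_coe.mp hG.disjoint) (#S - #(neighborsIn G V S))
    fun A hA => by have := hmax A (mem_powerset.mpr hA); omega
  refine ⟨M, hM, not_lt.mp fun hlt => ?_⟩
  have hS : S.Nonempty := nonempty_iff_ne_empty.mpr fun h => by subst h; simp at hUM; omega
  obtain ⟨x, hxV, hxN⟩ := exists_mem_notMem_of_card_lt_card
    (show #(neighborsIn G V S) < #V by have := card_le_card hSU; omega)
  have hxS : x ∉ S := fun h => disjoint_left.mp (disjoint_coe.mp hG.disjoint) (hSU h) hxV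
  have := heq.card_add_card_lt hG hconn hM hSU hS (x := x) (by simp [hxS, hxN])
  omega

theorem card_lt_card_neighborsIn (heq : Equimatchable G) (hG : G.IsBipartiteWith U V)
    (hconn : G.Connected) (hcard : #U = #V) {S : Finset W} (hSU : S ⊂ U) (hS : S.Nonempty) :
    #S < #(neighborsIn G V S) := by
  obtain ⟨M, hM, hUM⟩ := heq.exists_isMatchingSet_card_le hG hconn hcard
  obtain ⟨x, hxU, hxS⟩ := exists_of_ssubset hSU
  have hxN : x ∉ neighborsIn G V S := fun h =>
    disjoint_left.mp (disjoint_coe.mp hG.disjoint) hxU (mem_neighborsIn.mp h).1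
  have := heq.card_add_card_lt hG hconn hM hSU.subset hS (x := x) (by simp [hxS, hxN])
  omega

theorem exists_isMatchingSet_saturating_erase (heq : Equimatchable G)
    (hG : G.IsBipartiteWith U V) (hconn : G.Connected) (hcard : #U = #V) {u v : W} (hu : u ∈ U)
    (hv : v ∈ V) : ∃ M, IsMatchingSet G M ∧ (∀ t ∈ U.erase u, Saturates M t) ∧ ∀ e ∈ M, v ∉ e := by
  have hdisj : Disjoint (U.erase u) (V.erase v) :=
    disjoint_of_subset_left (erase_subset _ _)
      (disjoint_of_subset_right (erase_subset _ _) (disjoint_coe.mp hG.disjoint))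
  obtain ⟨M, hM, hcardM, hMedge⟩ :=
    exists_isMatchingSet_of_card_le_card_neighborsIn_add (G := G) hdisj 0 fun A hA => by
      rcases A.eq_empty_or_nonempty with rfl | hA'
      · simp
      have := heq.card_lt_card_neighborsIn hG hconn hcard (hA.trans_ssubset (erase_ssubset hu)) hA'
      have hN : neighborsIn G (V.erase v) A = (neighborsIn G V A).erase v := by
        ext; simp [mem_neighborsIn, and_assoc]
      have := pred_card_le_card_erase (s := neighborsIn G V A) (a := v)
      rw [hN]
      omega
  refine ⟨M, hM, fun t ht => hM.saturates_of_card_le (fun e he => ?_) (by omega) ht, ?_⟩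
  · obtain ⟨t, ht, r, -, rfl⟩ := hMedge e he
    exact ⟨t, ht, Sym2.mem_mk_left t r⟩
  · intro e he hve
    obtain ⟨t, ht, r, hr, rfl⟩ := hMedge e he
    rcases Sym2.mem_iff.mp hve with rfl | rfl
    exacts [disjoint_left.mp (disjoint_coe.mp hG.disjoint) (mem_of_mem_erase ht) hv,
      (mem_erase.mp hr).1 rfl]

theorem adj_of_mem_of_mem (heq : Equimatchable G) (hG : G.IsBipartiteWith U V)
    (hconn : G.Connected) (hcard : #U = #V) {u v : W} (hu : u ∈ U) (hv : v ∈ V) : G.Adj u v := by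
  obtain ⟨M, hM, hMsat, hMv⟩ := heq.exists_isMatchingSet_saturating_erase hG hconn hcard hu hv
  obtain ⟨K, hMK, hK⟩ := hM.exists_isMaximalMatching_superset
  obtain ⟨P, hP, hUP⟩ := heq.exists_isMatchingSet_card_le hG hconn hcard
  obtain ⟨e, he, hve⟩ := hK.1.saturates_of_card_le
    (fun _ he => hG.symm.exists_mem_of_mem_edgeSet (hK.1.1 he))
    (by have := heq.card_le hP hK; omega) hv
  obtain ⟨x, rfl⟩ := Sym2.mem_iff_exists.mp hve
  by_contra hnadj
  have hxu : x ≠ u := fun h => hnadj (h ▸ (hK.1.adj he).symm)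
  obtain ⟨f, hf, hxf⟩ :=
    hMsat x (mem_erase.mpr ⟨hxu, hG.symm.mem_of_mem_adj hv (hK.1.adj he)⟩)
  exact hMv f hf
    (hK.1.eq_of_mem_of_mem he (hMK hf) (Sym2.mem_mk_right v x) hxf ▸ Sym2.mem_mk_left v x)

end Equimatchable

def isoCompleteBipartiteGraph (U : Finset W) (h : ∀ a b, G.Adj a b ↔ (a ∈ U ↔ b ∉ U)) :
    G ≃g completeBipartiteGraph {w // w ∈ U} {w // w ∉ U} where
  toEquiv := (Equiv.sumCompl (· ∈ U)).symm
  map_rel_iff' {a b} := by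
    by_cases ha : a ∈ U <;> by_cases hb : b ∈ U <;> simp [ha, hb, h]

end Matchings

/-- A connected bipartite equimatchable graph with balanced bipartition `U ∪ V`,
`|U| = |V| = n`, is isomorphic to `K_{n,n}`. -/
theorem equimatchable_balanced_bipartite_iso {W : Type*} [Fintype W] [DecidableEq W]
    (G : SimpleGraph W) (U V : Finset W)
    (hdisj : Disjoint U V) (hcover : U ∪ V = Finset.univ)
    (hbip : ∀ a b : W, G.Adj a b → (a ∈ U ∧ b ∈ V) ∨ (a ∈ V ∧ b ∈ U))
    (hconn : G.Connected) (heq : Equimatchable G) (hcard : U.card = V.card) :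
    Nonempty (G ≃g completeBipartiteGraph (Fin U.card) (Fin U.card)) := by
  have hG : G.IsBipartiteWith U V := ⟨disjoint_coe.mpr hdisj, fun a b h => hbip a b h⟩
  have hV : ∀ w, w ∉ U ↔ w ∈ V := fun w =>
    ⟨(mem_union.mp (hcover ▸ mem_univ w)).resolve_left, fun hw hwU => disjoint_left.mp hdisj hwU hw⟩
  have hadj : ∀ a b, G.Adj a b ↔ (a ∈ U ↔ b ∉ U) := by
    intro a b
    by_cases ha : a ∈ U <;> by_cases hb : b ∈ U <;>
      simp only [ha, hb, not_true, not_false_iff, iff_true, iff_false]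
    · exact fun h => (hV b).mpr (hG.mem_of_mem_adj ha h) hb
    · exact heq.adj_of_mem_of_mem hG hconn hcard ha ((hV b).mp hb)
    · exact (heq.adj_of_mem_of_mem hG hconn hcard hb ((hV a).mp ha)).symm
    · exact fun h => hb (hG.symm.mem_of_mem_adj ((hV a).mp ha) h)
  exact ⟨(isoCompleteBipartiteGraph U hadj).trans <|
    SimpleGraph.completeBipartiteGraphCongr U.equivFin <|
    (Equiv.subtypeEquivRight hV).trans (V.equivFin.trans (finCongr hcard.symm))⟩
end

section
/- Let G be a graph and M a matching in G. If G is equimatchable, then the graph G - N_e[M] obtained by deleting all edges adjacent to or in M (and the resulting isolated vertices may be kept or removed) is equimatchable. -/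
/-- The graph `G - N_e[M]`: delete all edges in or adjacent to an edge of `M`,
i.e. the subgraph on the vertices not saturated by `M`. -/
def deleteClosedEdgeNbhd {V : Type*} (G : SimpleGraph V) (M : Finset (Sym2 V)) :
    SimpleGraph V where
  Adj a b := G.Adj a b ∧ ∀ f ∈ M, a ∉ f ∧ b ∉ f
  symm := by
    constructor
    intro a b h
    exact ⟨h.1.symm, fun f hf => ⟨(h.2 f hf).2, (h.2 f hf).1⟩⟩
  loopless := ⟨fun a h => G.loopless.irrefl a h.1⟩


/-! If `M'` is a maximal matching of `G - N_e[M]`, then `M ∪ M'` is a maximal matching of `G`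
and the union is disjoint: an edge of `G` not dominated by `M` lies in `G - N_e[M]`, where `M'`
dominates it. Hence every maximal matching of `G - N_e[M]` has `ν - |M|` edges, where `ν` is the
common size of the maximal matchings of `G`. -/

open Finset

section

variable {V : Type*} {G : SimpleGraph V} {M M' : Finset (Sym2 V)}

theorem mem_edgeSet_deleteClosedEdgeNbhd {e : Sym2 V} :
    e ∈ (deleteClosedEdgeNbhd G M).edgeSet ↔ e ∈ G.edgeSet ∧ ∀ f ∈ M, ∀ v ∈ e, v ∉ f := by
  induction e using Sym2.ind with
  | _ a b =>
    simp only [SimpleGraph.mem_edgeSet, deleteClosedEdgeNbhd, Sym2.mem_iff, forall_eq_or_imp,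
      forall_eq]

theorem IsMatchingSet.union [DecidableEq V] (hM : IsMatchingSet G M) (hM' : IsMatchingSet G M')
    (hdisj : ∀ e ∈ M, ∀ f ∈ M', ∀ v ∈ e, v ∉ f) : IsMatchingSet G (M ∪ M') := by
  refine ⟨by simpa only [coe_union, Set.union_subset_iff] using ⟨hM.1, hM'.1⟩, ?_⟩
  rintro e he f hf hef v ⟨hve, hvf⟩
  rcases mem_union.1 he with he | he <;> rcases mem_union.1 hf with hf | hf
  · exact hM.2 e he f hf hef v ⟨hve, hvf⟩
  · exact hdisj e he f hf v hve hvf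
  · exact hdisj f hf e he v hvf hve
  · exact hM'.2 e he f hf hef v ⟨hve, hvf⟩

theorem disjoint_of_subset_edgeSet_deleteClosedEdgeNbhd
    (hM' : ↑M' ⊆ (deleteClosedEdgeNbhd G M).edgeSet) : Disjoint M M' :=
  disjoint_left.2 fun e heM heM' =>
    (mem_edgeSet_deleteClosedEdgeNbhd.1 (hM' heM')).2 e heM _ (Sym2.out_fst_mem e)
      (Sym2.out_fst_mem e)

theorem IsMaximalMatching.union_of_deleteClosedEdgeNbhd [DecidableEq V]
    (hM : IsMatchingSet G M)
    (hM' : IsMaximalMatching (deleteClosedEdgeNbhd G M) M') : IsMaximalMatching G (M ∪ M') := by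
  have hM'G : IsMatchingSet G M' :=
    ⟨fun e he => (mem_edgeSet_deleteClosedEdgeNbhd.1 (hM'.1.1 he)).1, hM'.1.2⟩
  refine ⟨hM.union hM'G fun e he f hf v hve hvf =>
    (mem_edgeSet_deleteClosedEdgeNbhd.1 (hM'.1.1 hf)).2 e he v hvf hve, fun e he => ?_⟩
  by_cases hfree : ∀ f ∈ M, ∀ v ∈ e, v ∉ f
  · obtain ⟨f, hf, hv⟩ := hM'.2 e (mem_edgeSet_deleteClosedEdgeNbhd.2 ⟨he, hfree⟩)
    exact ⟨f, mem_union_right _ hf, hv⟩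
  · push Not at hfree
    obtain ⟨f, hf, v, hve, hvf⟩ := hfree
    exact ⟨f, mem_union_left _ hf, v, hve, hvf⟩

end

/-- If `G` is equimatchable and `M` is a matching in `G`, then `G - N_e[M]` is equimatchable. -/
theorem equimatchable_deleteClosedEdgeNbhd {V : Type*} (G : SimpleGraph V)
    (M : Finset (Sym2 V)) (hM : IsMatchingSet G M) (hG : Equimatchable G) :
    Equimatchable (deleteClosedEdgeNbhd G M) := by
  classical
  intro M₁ M₂ h₁ h₂
  have hcard := hG _ _ (h₁.union_of_deleteClosedEdgeNbhd hM) (h₂.union_of_deleteClosedEdgeNbhd hM)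
  rwa [card_union_of_disjoint (disjoint_of_subset_edgeSet_deleteClosedEdgeNbhd h₁.1.1),
    card_union_of_disjoint (disjoint_of_subset_edgeSet_deleteClosedEdgeNbhd h₂.1.1),
    Nat.add_left_cancel_iff] at hcard
end

section
/- Let G = (A ∪ B, E) be a connected well-edge-dominated bipartite graph with |A| < |B|, and let x ∈ B be a cut-vertex of G. Then every connected component of G − x is well-edge-dominated. -/
lemma eds_mono {V : Type*} {G : SimpleGraph V} {F F' : Finset (Sym2 V)}
    (hsub : F ⊆ F') (hedge : ↑F' ⊆ G.edgeSet) (h : IsEDS G F) : IsEDS G F' :=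
  ⟨hedge, fun e he => by
    obtain ⟨f, hf, v, hv⟩ := h.2 e he
    exact ⟨f, hsub hf, v, hv⟩⟩

lemma isMinEDS_of_erase {V : Type*} [DecidableEq V] {G : SimpleGraph V} {F : Finset (Sym2 V)}
    (h : IsEDS G F) (h2 : ∀ g ∈ F, ¬ IsEDS G (F.erase g)) : IsMinEDS G F := by
  refine ⟨h, fun F' hF' hF'e => ?_⟩
  obtain ⟨g, hgF, hgF'⟩ := Finset.exists_of_ssubset hF'
  refine h2 g hgF (eds_mono ?_ ?_ hF'e)
  · intro a ha
    exact Finset.mem_erase.2 ⟨fun hag => hgF' (by rw [hag] at ha; exact ha), hF'.1 ha⟩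
  · intro e he
    exact h.1 (Finset.mem_coe.2 (Finset.erase_subset _ _ (Finset.mem_coe.1 he)))

lemma sym2_exists_mem {α : Type*} (z : Sym2 α) : ∃ a, a ∈ z :=
  Sym2.ind (fun p q => ⟨p, Sym2.mem_mk_left p q⟩) z

theorem wed_components_aux {W : Type*} [Fintype W] [DecidableEq W]
    (G : SimpleGraph W)
    (hconn : G.Connected) (hwed : WellEdgeDominated G)
    (x : W)
    (hcut : ¬ (G.induce {v : W | v ≠ x}).Connected) :
    ∀ c : (G.induce {v : W | v ≠ x}).ConnectedComponent,
      WellEdgeDominated ((G.induce {v : W | v ≠ x}).induce c.supp) := by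
  classical
  intro c F1 F2 hF1 hF2
  let H : SimpleGraph {v : W | v ≠ x} := G.induce {v : W | v ≠ x}
  -- the set of vertices of `W` lying in component `c`
  set S : Set W := {w : W | ∃ h : w ≠ x, H.connectedComponentMk ⟨w, h⟩ = c} with hSdef
  have hxS : x ∉ S := fun ⟨h, _⟩ => h rfl
  -- adjacent non-x vertices are in the same component
  have hadjS : ∀ u v : W, u ≠ x → v ≠ x → G.Adj u v → (u ∈ S ↔ v ∈ S) := by
    intro u v hu hv huv
    have hcomp : H.connectedComponentMk ⟨u, hu⟩ = H.connectedComponentMk ⟨v, hv⟩ :=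
      SimpleGraph.ConnectedComponent.sound (SimpleGraph.Adj.reachable (by exact huv))
    constructor
    · rintro ⟨h, hc⟩; exact ⟨hv, by rw [← hcomp]; exact hc⟩
    · rintro ⟨h, hc⟩; exact ⟨hu, by rw [hcomp]; exact hc⟩
  -- the embedding of the component vertices into W
  set ι : {a : {v : W // v ∈ {v : W | v ≠ x}} // a ∈ c.supp} → W := fun a => a.1.1 with hιdef
  have hιinj : Function.Injective ι := fun a b h => Subtype.ext (Subtype.ext h)
  have hιS : ∀ a, ι a ∈ S := fun a => ⟨a.1.2, a.2⟩
  -- x has a neighbor outside S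
  have key : ∀ (n : ℕ) (u : W), u ≠ x → u ∉ S → ∀ w : G.Walk u x, w.length = n →
      ∃ b, G.Adj x b ∧ b ≠ x ∧ b ∉ S := by
    intro n
    induction n with
    | zero =>
      intro u hux _ w hw
      exact absurd (SimpleGraph.Walk.eq_of_length_eq_zero hw) hux
    | succ n ih =>
      intro u hux huS w hw
      cases w with
      | nil => exact absurd rfl hux
      | @cons _ y _ h p =>
        by_cases hyx : y = x
        · subst hyx; exact ⟨u, h.symm, hux, huS⟩
        · have hyS : y ∉ S := fun hy => huS ((hadjS u y hux hyx h).2 hy)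
          refine ih y hyx hyS p ?_
          simp only [SimpleGraph.Walk.length_cons] at hw
          omega
  have hbex : ∃ b, G.Adj x b ∧ b ≠ x ∧ b ∉ S := by
    obtain ⟨v₀, hv₀⟩ := c.exists_rep
    have hnc : ¬ H.Preconnected := by
      intro hp
      exact hcut ((SimpleGraph.connected_iff _).2 ⟨hp, ⟨v₀⟩⟩)
    rw [SimpleGraph.Preconnected] at hnc
    push_neg at hnc
    obtain ⟨u₀, w₀, hr⟩ := hnc
    have : ∃ u₁ : {v : W | v ≠ x}, H.connectedComponentMk u₁ ≠ c := by
      by_cases hcu : H.connectedComponentMk u₀ = c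
      · refine ⟨w₀, fun hcw => hr ?_⟩
        exact SimpleGraph.ConnectedComponent.exact (hcu.trans hcw.symm)
      · exact ⟨u₀, hcu⟩
    obtain ⟨u₁, hu₁⟩ := this
    have hu₁x : (u₁ : W) ≠ x := u₁.2
    have hu₁S : (u₁ : W) ∉ S := by
      rintro ⟨h, hc'⟩
      exact hu₁ hc'
    obtain ⟨w⟩ := hconn.preconnected (u₁ : W) x
    exact key w.length _ hu₁x hu₁S w rfl
  obtain ⟨b, hxb, hbx, hbS⟩ := hbex
  -- maximal matching avoiding S, containing s(x,b)
  set P : Finset (Sym2 W) → Prop := fun M =>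
    ↑M ⊆ G.edgeSet ∧ (∀ e ∈ M, ∀ v : W, v ∈ e → v ∉ S) ∧
    (∀ e ∈ M, ∀ f ∈ M, e ≠ f → ∀ v : W, ¬ (v ∈ e ∧ v ∈ f)) ∧ s(x, b) ∈ M with hPdef
  have hP0 : P {s(x, b)} := by
    refine ⟨?_, ?_, ?_, Finset.mem_singleton_self _⟩
    · intro e he
      simp only [Finset.coe_singleton, Set.mem_singleton_iff] at he
      rw [he]; exact (SimpleGraph.mem_edgeSet G).2 hxb
    · intro e he v hv
      rw [Finset.mem_singleton] at he; subst he
      rcases Sym2.mem_iff.1 hv with rfl | rfl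
      · exact hxS
      · exact hbS
    · intro e he f hf hef
      rw [Finset.mem_singleton] at he hf
      exact absurd (he.trans hf.symm) hef
  obtain ⟨M, hMmem, hMmax⟩ := Finset.exists_max_image
      ((Finset.univ : Finset (Finset (Sym2 W))).filter P) Finset.card
      ⟨{s(x, b)}, Finset.mem_filter.2 ⟨Finset.mem_univ _, hP0⟩⟩
  have hPM : P M := (Finset.mem_filter.1 hMmem).2
  -- maximality: every edge outside S is dominated by M
  have hMdom : ∀ u v : W, G.Adj u v → u ∉ S → v ∉ S →
      ∃ f ∈ M, ∃ w : W, w ∈ s(u, v) ∧ w ∈ f := by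
    intro u v huv huS hvS
    by_contra hcon
    push_neg at hcon
    have hne : s(u, v) ∉ M := fun hmem =>
      hcon _ hmem u (Sym2.mem_mk_left u v) (Sym2.mem_mk_left u v)
    have hP' : P (insert s(u, v) M) := by
      refine ⟨?_, ?_, ?_, Finset.mem_insert_of_mem hPM.2.2.2⟩
      · intro e he
        simp only [Finset.coe_insert, Set.mem_insert_iff] at he
        rcases he with rfl | he
        · exact (SimpleGraph.mem_edgeSet G).2 huv
        · exact hPM.1 he
      · intro e he w hw
        rcases Finset.mem_insert.1 he with rfl | he
        · rcases Sym2.mem_iff.1 hw with rfl | rfl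
          · exact huS
          · exact hvS
        · exact hPM.2.1 e he w hw
      · intro e he f hf hef w
        rcases Finset.mem_insert.1 he with rfl | he <;>
          rcases Finset.mem_insert.1 hf with rfl | hf
        · exact absurd rfl hef
        · exact fun ⟨h1, h2⟩ => hcon f hf w h1 h2
        · exact fun ⟨h1, h2⟩ => hcon e he w h2 h1
        · exact hPM.2.2.1 e he f hf hef w
    have hcard := hMmax (insert s(u, v) M)
      (Finset.mem_filter.2 ⟨Finset.mem_univ _, hP'⟩)
    rw [Finset.card_insert_of_notMem hne] at hcard
    omega
  -- lifting edges of the component into G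
  have hlift : ∀ z ∈ (H.induce c.supp).edgeSet, Sym2.map ι z ∈ G.edgeSet := by
    intro z
    induction z using Sym2.ind with
    | _ a b' =>
      intro hz
      rw [SimpleGraph.mem_edgeSet] at hz
      rw [Sym2.map_pair_eq, SimpleGraph.mem_edgeSet]
      exact hz
  have himgS : ∀ (z : Sym2 {a : {v : W // v ∈ {v : W | v ≠ x}} // a ∈ c.supp}) (w : W),
      w ∈ Sym2.map ι z → w ∈ S := by
    intro z w hw
    obtain ⟨a, ha, rfl⟩ := Sym2.mem_map.1 hw
    exact hιS a
  have hdisjMF : ∀ F : Finset (Sym2 {a : {v : W // v ∈ {v : W | v ≠ x}} // a ∈ c.supp}),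
      Disjoint (F.image (Sym2.map ι)) M := by
    intro F
    rw [Finset.disjoint_left]
    intro e heF heM
    obtain ⟨z, hz, rfl⟩ := Finset.mem_image.1 heF
    obtain ⟨a, ha⟩ := sym2_exists_mem z
    exact hPM.2.1 _ heM (ι a) (Sym2.mem_map.2 ⟨a, ha, rfl⟩) (hιS a)
  -- main lemma: each minimal EDS of the component extends to one of G
  have main : ∀ F, IsMinEDS (H.induce c.supp) F →
      IsMinEDS G (F.image (Sym2.map ι) ∪ M) := by
    intro F hF
    have hFsub : ∀ f ∈ F, f ∈ (H.induce c.supp).edgeSet := fun f hf =>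
      hF.1.1 (Finset.mem_coe.2 hf)
    have hsubU : ↑(F.image (Sym2.map ι) ∪ M) ⊆ G.edgeSet := by
      intro e he
      rw [Finset.coe_union, Set.mem_union] at he
      rcases he with he | he
      · obtain ⟨z, hz, rfl⟩ := Finset.mem_image.1 (Finset.mem_coe.1 he)
        exact hlift z (hFsub z hz)
      · exact hPM.1 he
    refine isMinEDS_of_erase ⟨hsubU, ?_⟩ ?_
    · -- domination
      intro e
      induction e using Sym2.ind with
      | _ u v =>
        intro he
        rw [SimpleGraph.mem_edgeSet] at he
        by_cases hux : u = x
        · exact ⟨s(x, b), Finset.mem_union_right _ hPM.2.2.2, x,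
            Sym2.mem_iff.2 (Or.inl hux.symm), Sym2.mem_mk_left _ _⟩
        · by_cases hvx : v = x
          · exact ⟨s(x, b), Finset.mem_union_right _ hPM.2.2.2, x,
              Sym2.mem_iff.2 (Or.inr hvx.symm), Sym2.mem_mk_left _ _⟩
          · by_cases huS : u ∈ S
            · -- edge inside the component: use F
              have hvS : v ∈ S := (hadjS u v hux hvx he).1 huS
              obtain ⟨hux', hcu⟩ := huS
              obtain ⟨hvx', hcv⟩ := hvS
              have hadj : (H.induce c.supp).Adj ⟨⟨u, hux'⟩, hcu⟩ ⟨⟨v, hvx'⟩, hcv⟩ := he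
              obtain ⟨f, hfF, a, haf1, haf2⟩ :=
                hF.1.2 s(⟨⟨u, hux'⟩, hcu⟩, ⟨⟨v, hvx'⟩, hcv⟩)
                  ((SimpleGraph.mem_edgeSet _).2 hadj)
              refine ⟨Sym2.map ι f, Finset.mem_union_left _ (Finset.mem_image_of_mem _ hfF),
                ι a, ?_, Sym2.mem_map.2 ⟨a, haf2, rfl⟩⟩
              rcases Sym2.mem_iff.1 haf1 with rfl | rfl
              · exact Sym2.mem_mk_left _ _
              · exact Sym2.mem_mk_right _ _
            · -- edge outside S: use M
              have hvS : v ∉ S := fun h => huS ((hadjS u v hux hvx he).2 h)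
              obtain ⟨f, hfM, w, hw1, hw2⟩ := hMdom u v he huS hvS
              exact ⟨f, Finset.mem_union_right _ hfM, w, hw1, hw2⟩
    · -- minimality
      intro g hg
      rcases Finset.mem_union.1 hg with hgI | hgM
      · obtain ⟨g₀, hg₀F, rfl⟩ := Finset.mem_image.1 hgI
        have hnot := hF.2 (F.erase g₀) (Finset.erase_ssubset hg₀F)
        have hsub' : ↑(F.erase g₀) ⊆ (H.induce c.supp).edgeSet := fun f hf =>
          hF.1.1 (Finset.mem_coe.2 (Finset.erase_subset _ _ (Finset.mem_coe.1 hf)))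
        have hndom : ¬ ∀ e ∈ (H.induce c.supp).edgeSet,
            ∃ f ∈ F.erase g₀, ∃ w, w ∈ e ∧ w ∈ f := fun hd => hnot ⟨hsub', hd⟩
        push_neg at hndom
        obtain ⟨ε, hεE, hεnd⟩ := hndom
        intro hEDS
        obtain ⟨f, hf, w, hwε, hwf⟩ := hEDS.2 (Sym2.map ι ε) (hlift ε hεE)
        obtain ⟨a, haε, rfl⟩ := Sym2.mem_map.1 hwε
        have hf' := Finset.mem_erase.1 hf
        rcases Finset.mem_union.1 hf'.2 with hfI | hfM
        · obtain ⟨f₀, hf₀F, rfl⟩ := Finset.mem_image.1 hfI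
          have hf₀g₀ : f₀ ≠ g₀ := fun h => hf'.1 (by rw [h])
          obtain ⟨a', ha'f₀, ha'⟩ := Sym2.mem_map.1 hwf
          have haa : a' = a := hιinj ha'
          subst haa
          exact hεnd f₀ (Finset.mem_erase.2 ⟨hf₀g₀, hf₀F⟩) a' haε ha'f₀
        · exact hPM.2.1 _ hfM (ι a) hwf (hιS a)
      · intro hEDS
        obtain ⟨f, hf, w, hwg, hwf⟩ := hEDS.2 g (hPM.1 (Finset.mem_coe.2 hgM))
        have hf' := Finset.mem_erase.1 hf
        rcases Finset.mem_union.1 hf'.2 with hfI | hfM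
        · obtain ⟨f₀, hf₀F, rfl⟩ := Finset.mem_image.1 hfI
          exact hPM.2.1 g hgM w hwg (himgS f₀ w hwf)
        · exact hPM.2.2.1 g hgM f hfM hf'.1.symm w ⟨hwg, hwf⟩
  have hcard : ∀ F : Finset (Sym2 {a : {v : W // v ∈ {v : W | v ≠ x}} // a ∈ c.supp}),
      (F.image (Sym2.map ι) ∪ M).card = F.card + M.card := by
    intro F
    rw [Finset.card_union_of_disjoint (hdisjMF F),
      Finset.card_image_of_injective _ (Sym2.map.injective hιinj)]
  have hfin := hwed _ _ (main F1 hF1) (main F2 hF2)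
  rw [hcard F1, hcard F2] at hfin
  omega

/-- If `G = (A ∪ B, E)` is a connected well-edge-dominated bipartite graph with
`|A| < |B|` and `x ∈ B` is a cut-vertex, then every connected component of `G - x`
is well-edge-dominated. -/
theorem wed_components_of_delete_cutvertex {W : Type*} [Fintype W] [DecidableEq W]
    (G : SimpleGraph W) (A B : Finset W)
    (hdisj : Disjoint A B) (hcover : A ∪ B = Finset.univ)
    (hbip : ∀ a b : W, G.Adj a b → (a ∈ A ∧ b ∈ B) ∨ (a ∈ B ∧ b ∈ A))
    (hcard : A.card < B.card)
    (hconn : G.Connected) (hwed : WellEdgeDominated G)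
    (x : W) (hx : x ∈ B)
    (hcut : ¬ (G.induce {v : W | v ≠ x}).Connected) :
    ∀ c : (G.induce {v : W | v ≠ x}).ConnectedComponent,
      WellEdgeDominated ((G.induce {v : W | v ≠ x}).induce c.supp) := by
  exact wed_components_aux G hconn hwed x hcut
end

section
/- If G is an outerplanar graph of even order 2k with k ≥ 3 whose outer face boundary is a Hamiltonian cycle v_1 v_2 ... v_{2k} and deg(v_1) = 2, then G is not equimatchable. -/
/-- An outerplanar graph of even order `2k`, `k ≥ 3`, whose outer face boundary is the
Hamiltonian cycle `v_0 v_1 ⋯ v_{2k-1}` (so all other edges are chords of this cycle)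
and in which `v_0` has degree 2 (its only neighbors are `v_1` and `v_{2k-1}`),
is not equimatchable. -/
theorem outerplanar_even_not_equimatchable (k : ℕ) (hk : 3 ≤ k)
    (G : SimpleGraph (ZMod (2 * k)))
    (hcycle : ∀ i : ZMod (2 * k), G.Adj i (i + 1))
    (hdeg : ∀ j : ZMod (2 * k), G.Adj 0 j → j = 1 ∨ j = -1) :
    ¬ Equimatchable G := by
  haveI : NeZero (2 * k) := ⟨by omega⟩
  have hval : ∀ a : ℕ, a < 2 * k → ((a : ZMod (2 * k))).val = a :=
    fun a ha => ZMod.val_natCast_of_lt ha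
  have hinj : ∀ a b : ℕ, a < 2 * k → b < 2 * k →
      (a : ZMod (2 * k)) = (b : ZMod (2 * k)) → a = b := by
    intro a b ha hb h
    have h2 := congrArg ZMod.val h
    rwa [hval a ha, hval b hb] at h2
  set f : ℕ → Sym2 (ZMod (2 * k)) :=
    fun i => s(((2 * i : ℕ) : ZMod (2 * k)), ((2 * i + 1 : ℕ) : ZMod (2 * k))) with hf
  set e12 : Sym2 (ZMod (2 * k)) :=
    s(((1 : ℕ) : ZMod (2 * k)), ((2 : ℕ) : ZMod (2 * k))) with he12
  have hfe : ∀ i : ℕ, f i ∈ G.edgeSet := by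
    intro i
    have h1 : ((2 * i + 1 : ℕ) : ZMod (2 * k)) = ((2 * i : ℕ) : ZMod (2 * k)) + 1 := by
      push_cast; ring
    show s(((2 * i : ℕ) : ZMod (2 * k)), ((2 * i + 1 : ℕ) : ZMod (2 * k))) ∈ G.edgeSet
    rw [SimpleGraph.mem_edgeSet, h1]
    exact hcycle _
  have he12e : e12 ∈ G.edgeSet := by
    have h1 : ((2 : ℕ) : ZMod (2 * k)) = ((1 : ℕ) : ZMod (2 * k)) + 1 := by
      push_cast; ring
    show s(((1 : ℕ) : ZMod (2 * k)), ((2 : ℕ) : ZMod (2 * k))) ∈ G.edgeSet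
    rw [SimpleGraph.mem_edgeSet, h1]
    exact hcycle _
  have hmem : ∀ (i : ℕ) (v : ZMod (2 * k)),
      v ∈ f i ↔ v = ((2 * i : ℕ) : ZMod (2 * k)) ∨ v = ((2 * i + 1 : ℕ) : ZMod (2 * k)) :=
    fun i v => Sym2.mem_iff
  have hmem12 : ∀ v : ZMod (2 * k),
      v ∈ e12 ↔ v = ((1 : ℕ) : ZMod (2 * k)) ∨ v = ((2 : ℕ) : ZMod (2 * k)) :=
    fun v => Sym2.mem_iff
  have key : ∀ i j : ℕ, i < k → j < k → i ≠ j →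
      ∀ v : ZMod (2 * k), v ∈ f i → v ∈ f j → False := by
    intro i j hi hj hij v hvi hvj
    rw [hmem] at hvi hvj
    rcases hvi with h1 | h1 <;> rcases hvj with h2 | h2 <;>
      (rw [h1] at h2; have := hinj _ _ (by omega) (by omega) h2; omega)
  have key2 : ∀ i : ℕ, 2 ≤ i → i < k →
      ∀ v : ZMod (2 * k), v ∈ e12 → v ∈ f i → False := by
    intro i h2i hik v hv1 hv2
    rw [hmem12] at hv1
    rw [hmem] at hv2
    rcases hv1 with h1 | h1 <;> rcases hv2 with h2 | h2 <;>
      (rw [h1] at h2; have := hinj _ _ (by omega) (by omega) h2; omega)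
  have hcast_self : ∀ v : ZMod (2 * k), ((v.val : ℕ) : ZMod (2 * k)) = v := by
    intro v
    rw [ZMod.natCast_val, ZMod.cast_id]
  -- M1 : the perfect matching
  set M1 : Finset (Sym2 (ZMod (2 * k))) := (Finset.range k).image f with hM1
  -- M2 : the smaller maximal matching
  set M2 : Finset (Sym2 (ZMod (2 * k))) := insert e12 ((Finset.Ico 2 k).image f) with hM2
  -- every vertex is covered by M1
  have cover1 : ∀ v : ZMod (2 * k), ∃ i : ℕ, i < k ∧ v ∈ f i := by
    intro v
    have ha : v.val < 2 * k := ZMod.val_lt v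
    refine ⟨v.val / 2, by omega, ?_⟩
    rw [hmem]
    have h : v.val = 2 * (v.val / 2) ∨ v.val = 2 * (v.val / 2) + 1 := by omega
    rcases h with h | h
    · left; rw [← h]; exact (hcast_self v).symm
    · right; rw [← h]; exact (hcast_self v).symm
  -- every vertex except 0 and 3 is covered by M2
  have cover2 : ∀ v : ZMod (2 * k), v ≠ 0 → v ≠ ((3 : ℕ) : ZMod (2 * k)) →
      ∃ g ∈ M2, v ∈ g := by
    intro v hv0 hv3
    have ha : v.val < 2 * k := ZMod.val_lt v
    have ha0 : v.val ≠ 0 := by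
      intro h
      apply hv0
      rw [← hcast_self v, h, Nat.cast_zero]
    have ha3 : v.val ≠ 3 := by
      intro h
      apply hv3
      rw [← hcast_self v, h]
    rcases (show v.val = 1 ∨ v.val = 2 ∨ 4 ≤ v.val by omega) with h | h | h
    · exact ⟨e12, Finset.mem_insert_self _ _, by
        rw [hmem12]; left; rw [← hcast_self v, h]⟩
    · exact ⟨e12, Finset.mem_insert_self _ _, by
        rw [hmem12]; right; rw [← hcast_self v, h]⟩
    · refine ⟨f (v.val / 2), Finset.mem_insert_of_mem ?_, ?_⟩
      · exact Finset.mem_image_of_mem f (Finset.mem_Ico.mpr ⟨by omega, by omega⟩)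
      · rw [hmem]
        have h2 : v.val = 2 * (v.val / 2) ∨ v.val = 2 * (v.val / 2) + 1 := by omega
        rcases h2 with h2 | h2
        · left; rw [← h2]; exact (hcast_self v).symm
        · right; rw [← h2]; exact (hcast_self v).symm
  -- 0 and 3 are not adjacent
  have contra03 : ¬ G.Adj 0 ((3 : ℕ) : ZMod (2 * k)) := by
    intro h
    rcases hdeg _ h with h1 | h1
    · have : (3 : ℕ) = 1 := hinj 3 1 (by omega) (by omega) (by rw [Nat.cast_one]; exact h1)
      omega
    · have h4 : ((4 : ℕ) : ZMod (2 * k)) = ((0 : ℕ) : ZMod (2 * k)) := by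
        have : ((4 : ℕ) : ZMod (2 * k)) = ((3 : ℕ) : ZMod (2 * k)) + 1 := by push_cast; ring
        rw [this, h1, Nat.cast_zero]; ring
      have := hinj 4 0 (by omega) (by omega) h4
      omega
  have hmax1 : IsMaximalMatching G M1 := by
    refine ⟨⟨?_, ?_⟩, ?_⟩
    · intro e he
      rw [Finset.mem_coe, hM1, Finset.mem_image] at he
      obtain ⟨i, _, rfl⟩ := he
      exact hfe i
    · intro e he g hg hne v hv
      rw [hM1, Finset.mem_image] at he hg
      obtain ⟨i, hi, rfl⟩ := he
      obtain ⟨j, hj, rfl⟩ := hg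
      rw [Finset.mem_range] at hi hj
      exact key i j hi hj (fun h => hne (by rw [h])) v hv.1 hv.2
    · intro e _
      induction e using Sym2.ind with
      | _ a b =>
        obtain ⟨i, hik, hvi⟩ := cover1 a
        exact ⟨f i, Finset.mem_image_of_mem f (Finset.mem_range.mpr hik),
          a, Sym2.mem_mk_left a b, hvi⟩
  have hmax2 : IsMaximalMatching G M2 := by
    have memM2 : ∀ e ∈ M2, e = e12 ∨ ∃ i : ℕ, 2 ≤ i ∧ i < k ∧ e = f i := by
      intro e he
      rw [hM2, Finset.mem_insert] at he
      rcases he with h | h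
      · exact Or.inl h
      · rw [Finset.mem_image] at h
        obtain ⟨i, hi, rfl⟩ := h
        rw [Finset.mem_Ico] at hi
        exact Or.inr ⟨i, hi.1, hi.2, rfl⟩
    refine ⟨⟨?_, ?_⟩, ?_⟩
    · intro e he
      rw [Finset.mem_coe] at he
      rcases memM2 e he with rfl | ⟨i, _, _, rfl⟩
      · exact he12e
      · exact hfe i
    · intro e he g hg hne v hv
      rcases memM2 e he with rfl | ⟨i, h2i, hik, rfl⟩ <;>
        rcases memM2 g hg with rfl | ⟨j, h2j, hjk, rfl⟩
      · exact hne rfl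
      · exact key2 j h2j hjk v hv.1 hv.2
      · exact key2 i h2i hik v hv.2 hv.1
      · exact key i j (by omega) (by omega) (fun h => hne (by rw [h])) v hv.1 hv.2
    · intro e he
      induction e using Sym2.ind with
      | _ a b =>
        rw [SimpleGraph.mem_edgeSet] at he
        by_cases ha : a ≠ 0 ∧ a ≠ ((3 : ℕ) : ZMod (2 * k))
        · obtain ⟨g, hg, hvg⟩ := cover2 a ha.1 ha.2
          exact ⟨g, hg, a, Sym2.mem_mk_left a b, hvg⟩
        · by_cases hb : b ≠ 0 ∧ b ≠ ((3 : ℕ) : ZMod (2 * k))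
          · obtain ⟨g, hg, hvg⟩ := cover2 b hb.1 hb.2
            exact ⟨g, hg, b, Sym2.mem_mk_right a b, hvg⟩
          · exfalso
            push_neg at ha hb
            have hane : a ≠ b := he.ne
            by_cases ha0 : a = 0
            · subst ha0
              have hb3 : b = ((3 : ℕ) : ZMod (2 * k)) := hb (fun h => hane h.symm)
              rw [hb3] at he
              exact contra03 he
            · have ha3 : a = ((3 : ℕ) : ZMod (2 * k)) := ha ha0
              by_cases hb0 : b = 0
              · subst hb0
                rw [ha3] at he
                exact contra03 he.symm
              · have hb3 : b = ((3 : ℕ) : ZMod (2 * k)) := hb hb0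
                rw [ha3, hb3] at hane
                exact hane rfl
  have hM1card : M1.card = k := by
    rw [hM1, Finset.card_image_of_injOn, Finset.card_range]
    intro i hi j hj hij
    rw [Finset.mem_coe, Finset.mem_range] at hi hj
    by_contra hne
    exact key i j hi hj hne _ (Sym2.mem_mk_left _ _) (hij ▸ Sym2.mem_mk_left _ _)
  have hM2card : M2.card = k - 1 := by
    have hnm : e12 ∉ (Finset.Ico 2 k).image f := by
      intro h
      rw [Finset.mem_image] at h
      obtain ⟨i, hi, hie⟩ := h
      rw [Finset.mem_Ico] at hi
      exact key2 i hi.1 hi.2 _ (Sym2.mem_mk_left _ _) (hie ▸ Sym2.mem_mk_left _ _)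
    rw [hM2, Finset.card_insert_of_notMem hnm, Finset.card_image_of_injOn, Nat.card_Ico]
    · omega
    · intro i hi j hj hij
      rw [Finset.mem_coe, Finset.mem_Ico] at hi hj
      by_contra hne
      exact key i j hi.2 hj.2 hne _ (Sym2.mem_mk_left _ _) (hij ▸ Sym2.mem_mk_left _ _)
  intro heq
  have := heq M1 M2 hmax1 hmax2
  rw [hM1card, hM2card] at this
  omega
end
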